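/- Pivoting is symmetric in its two vertices: for adjacent vertices u and v of a simple graph G, G ⋆ u ⋆ v ⋆ u = G ⋆ v ⋆ u ⋆ v. -/

import Mathlib

/-!
Both pivots are computed explicitly. When `u` and `v` are adjacent, `G ⋆ u ⋆ v ⋆ u` gives `u` the
neighbourhood `N(v) \ {u} ∪ {v}` and `v` the neighbourhood `N(u) \ {v} ∪ {u}`, and toggles the
adjacency of two vertices `x, y ∉ {u, v}` exactly when `(ux ∧ vy) xor (vx ∧ uy)`. This
description is invariant under exchanging `u` and `v`.
-/

/-- Local complementation of `G` at `u`: adjacency between two distinct common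
neighbors of `u` is toggled; all other adjacencies are unchanged. -/
def localComp {V : Type*} (G : SimpleGraph V) (u : V) : SimpleGraph V where
  Adj v w := v ≠ w ∧ Xor' (G.Adj v w) (G.Adj u v ∧ G.Adj u w)
  symm := ⟨by
    intro v w h
    refine ⟨h.1.symm, ?_⟩
    rcases h.2 with ⟨ha, hb⟩ | ⟨ha, hb⟩
    · exact Or.inl ⟨G.adj_symm ha, fun hc => hb ⟨hc.2, hc.1⟩⟩
    · exact Or.inr ⟨⟨ha.2, ha.1⟩, fun hc => hb (G.adj_symm hc)⟩⟩
  loopless := ⟨fun v h => h.1 rfl⟩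

/-- The pivot of `G` along the edge `uv`: `G ∧ uv = G ⋆ u ⋆ v ⋆ u`. -/
def pivot {V : Type*} (G : SimpleGraph V) (u v : V) : SimpleGraph V :=
  localComp (localComp (localComp G u) v) u

section

variable {V : Type*} {G : SimpleGraph V} {u v x y : V}

theorem localComp_adj :
    (localComp G u).Adj x y ↔ x ≠ y ∧ Xor (G.Adj x y) (G.Adj u x ∧ G.Adj u y) :=
  Iff.rfl

theorem localComp_adj_self_left : (localComp G u).Adj u y ↔ G.Adj u y := by
  grind [localComp_adj, SimpleGraph.irrefl]

theorem localComp_adj_of_adj (h : G.Adj u v) :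
    (localComp G u).Adj v y ↔ y ≠ v ∧ Xor (G.Adj v y) (G.Adj u y) := by
  grind [localComp_adj, SimpleGraph.irrefl]

theorem localComp_localComp_adj_left (h : G.Adj u v) :
    (localComp (localComp G u) v).Adj u y ↔ y ≠ u ∧ (y = v ∨ G.Adj v y) := by
  rw [localComp_adj, localComp_adj_self_left, localComp_adj_of_adj h, localComp_adj_of_adj h]
  grind [SimpleGraph.irrefl, G.adj_symm h]

theorem pivot_adj_left (h : G.Adj u v) :
    (pivot G u v).Adj u y ↔ y ≠ u ∧ (y = v ∨ G.Adj v y) := by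
  rw [pivot, localComp_adj_self_left, localComp_localComp_adj_left h]

theorem pivot_adj_right (h : G.Adj u v) :
    (pivot G u v).Adj v y ↔ y ≠ v ∧ (y = u ∨ G.Adj u y) := by
  rw [pivot, localComp_adj, localComp_localComp_adj_left h, localComp_localComp_adj_left h,
    localComp_adj_self_left, localComp_adj_of_adj h]
  grind [SimpleGraph.irrefl, G.adj_symm h]

theorem pivot_adj_of_ne (h : G.Adj u v) (hxu : x ≠ u) (hxv : x ≠ v) (hyu : y ≠ u) (hyv : y ≠ v) :
    (pivot G u v).Adj x y ↔
      x ≠ y ∧ Xor (G.Adj x y) (Xor (G.Adj u x ∧ G.Adj v y) (G.Adj v x ∧ G.Adj u y)) := by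
  rw [pivot, localComp_adj, localComp_localComp_adj_left h, localComp_localComp_adj_left h,
    localComp_adj, localComp_adj_of_adj h, localComp_adj_of_adj h, localComp_adj]
  grind

end

/-- Pivoting is symmetric in its two vertices: `G ⋆ u ⋆ v ⋆ u = G ⋆ v ⋆ u ⋆ v`. -/
theorem pivot_symm {V : Type*} (G : SimpleGraph V) (u v : V) (h : G.Adj u v) :
    localComp (localComp (localComp G u) v) u
      = localComp (localComp (localComp G v) u) v := by
  change pivot G u v = pivot G v u
  ext x y
  rcases eq_or_ne x u with rfl | hxu
  · rw [pivot_adj_left h, pivot_adj_right h.symm]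
  rcases eq_or_ne x v with rfl | hxv
  · rw [pivot_adj_right h, pivot_adj_left h.symm]
  rw [SimpleGraph.adj_comm, SimpleGraph.adj_comm (pivot G v u)]
  rcases eq_or_ne y u with rfl | hyu
  · rw [pivot_adj_left h, pivot_adj_right h.symm]
  rcases eq_or_ne y v with rfl | hyv
  · rw [pivot_adj_right h, pivot_adj_left h.symm]
  rw [pivot_adj_of_ne h hyu hyv hxu hxv, pivot_adj_of_ne h.symm hyv hyu hxv hxu,
    xor_comm (G.Adj v y ∧ _)]
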